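/- Let d ≥ 1 be odd, ℓ ≥ 1 an integer, and let ξ = Σ_{|k|≤d} λ^k ξ_k be a Laurent polynomial with coefficients ξ_k ∈ Mat_{n+1}(ℂ) satisfying ξ_{−k} = conj(ξ_k) (entrywise complex conjugation) and ξ_{−k} = Qξ_kQ for all k. Then conj(Q·ξ_{−d}^{2ℓ−1}·Q) = ξ_{−d}^{2ℓ−1}, and η̃₀ := Σ_{k=0}^{2ℓ−2} ξ_{−d}^k ξ_{−d+1} ξ_{−d}^{2ℓ−2−k} satisfies conj(η̃₀) = Qη̃₀Q. Consequently the loop B = λ⁻¹·ξ_{−d}^{2ℓ−1} + η₀ + λ·Qξ_{−d}^{2ℓ−1}Q, where η₀ is the matrix whose (mid,mid) block equals that of η̃₀ and whose other blocks are zero, satisfies B_{−k} = conj(B_k) for all k. -/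

import Mathlib

open Matrix

/-- Index type for `(n+1)×(n+1)` matrices partitioned into the blocks
`{0}` (size 1), `mid = {1,…,m}` (size `m`) and `bot = {m+1,…,n}` (size `k = n−m`). -/
abbrev Idx (m k : ℕ) := Fin 1 ⊕ Fin m ⊕ Fin k

/-- Assemble a matrix from nine blocks (block sizes 1, m, k). -/
def blk3 {R : Type*} {m k : ℕ}
    (A00 : Matrix (Fin 1) (Fin 1) R) (A01 : Matrix (Fin 1) (Fin m) R)
    (A02 : Matrix (Fin 1) (Fin k) R)
    (A10 : Matrix (Fin m) (Fin 1) R) (A11 : Matrix (Fin m) (Fin m) R)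
    (A12 : Matrix (Fin m) (Fin k) R)
    (A20 : Matrix (Fin k) (Fin 1) R) (A21 : Matrix (Fin k) (Fin m) R)
    (A22 : Matrix (Fin k) (Fin k) R) :
    Matrix (Idx m k) (Idx m k) R :=
  Matrix.of fun i j =>
    match i, j with
    | Sum.inl a, Sum.inl b => A00 a b
    | Sum.inl a, Sum.inr (Sum.inl b) => A01 a b
    | Sum.inl a, Sum.inr (Sum.inr b) => A02 a b
    | Sum.inr (Sum.inl a), Sum.inl b => A10 a b
    | Sum.inr (Sum.inl a), Sum.inr (Sum.inl b) => A11 a b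
    | Sum.inr (Sum.inl a), Sum.inr (Sum.inr b) => A12 a b
    | Sum.inr (Sum.inr a), Sum.inl b => A20 a b
    | Sum.inr (Sum.inr a), Sum.inr (Sum.inl b) => A21 a b
    | Sum.inr (Sum.inr a), Sum.inr (Sum.inr b) => A22 a b

/-- The involution `P = diag(−1, I_m, −I_k)`. -/
def Pmat (R : Type*) [Ring R] (m k : ℕ) : Matrix (Idx m k) (Idx m k) R :=
  blk3 (-1) 0 0 0 1 0 0 0 (-1)

/-- The involution `Q = diag(1, I_m, −I_k)`. -/
def Qmat (R : Type*) [Ring R] (m k : ℕ) : Matrix (Idx m k) (Idx m k) R :=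
  blk3 1 0 0 0 1 0 0 0 (-1)

/-- Projection onto the `(mid,mid)` block: all other blocks are set to zero. -/
def midProj {R : Type*} [Zero R] {m k : ℕ}
    (M : Matrix (Idx m k) (Idx m k) R) : Matrix (Idx m k) (Idx m k) R :=
  Matrix.of fun i j =>
    match i, j with
    | Sum.inr (Sum.inl a), Sum.inr (Sum.inl b) => M (Sum.inr (Sum.inl a)) (Sum.inr (Sum.inl b))
    | _, _ => 0

/-- `η̃₀ = Σ_{k=0}^{N−1} u^k v u^{N−1−k}` (with `u = ξ_{−d}`, `v = ξ_{−d+1}`, `N = 2ℓ−1`). -/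
def etaT {R : Type*} [Ring R] (u v : R) (N : ℕ) : R :=
  ∑ i ∈ Finset.range N, u ^ i * v * u ^ (N - 1 - i)

/-- The diagonal entries of `Q`. -/
def qfun (R : Type*) [Ring R] (m k : ℕ) : Idx m k → R :=
  Sum.elim (fun _ => 1) (Sum.elim (fun _ => 1) (fun _ => -1))

lemma Qmat_eq_diagonal (R : Type*) [Ring R] (m k : ℕ) :
    Qmat R m k = Matrix.diagonal (qfun R m k) := by
  ext i j
  rcases i with a | a | a <;> rcases j with b | b | b <;>
    simp [Qmat, blk3, qfun, Matrix.diagonal, Matrix.one_apply, Sum.inl.injEq,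
      Sum.inr.injEq, Matrix.zero_apply] <;>
    split <;> simp_all

lemma Qmat_mul_Qmat (R : Type*) [Ring R] (m k : ℕ) :
    Qmat R m k * Qmat R m k = 1 := by
  rw [Qmat_eq_diagonal, Matrix.diagonal_mul_diagonal]
  have : (fun i => qfun R m k i * qfun R m k i) = fun _ => (1 : R) := by
    funext i; rcases i with a | a | a <;> simp [qfun]
  rw [this, Matrix.diagonal_one]

lemma Qmat_conj (m k : ℕ) :
    (Qmat ℂ m k).map (starRingEnd ℂ) = Qmat ℂ m k := by
  ext i j
  rcases i with a | a | a <;> rcases j with b | b | b <;>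
    simp [Qmat, blk3, Matrix.map_apply, Matrix.one_apply, Matrix.neg_apply, apply_ite]

lemma conj2 {R : Type*} [Ring R] {Q : R} (hQQ : Q * Q = 1) (a b : R) :
    (Q * a * Q) * (Q * b * Q) = Q * (a * b) * Q := by
  calc (Q * a * Q) * (Q * b * Q) = Q * a * (Q * Q) * (b * Q) := by
        simp only [mul_assoc]
    _ = Q * (a * b) * Q := by rw [hQQ]; simp only [mul_one, mul_assoc]

lemma conjPow {R : Type*} [Ring R] {Q : R} (hQQ : Q * Q = 1) (a : R) (N : ℕ) :
    (Q * a * Q) ^ N = Q * a ^ N * Q := by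
  induction N with
  | zero => simp [pow_zero, hQQ]
  | succ n ih =>
      rw [pow_succ, ih, pow_succ, conj2 hQQ]

lemma midProj_conj_eq {m k : ℕ} {M : Matrix (Idx m k) (Idx m k) ℂ}
    (h : M.map (starRingEnd ℂ) = Qmat ℂ m k * M * Qmat ℂ m k) :
    (midProj M).map (starRingEnd ℂ) = midProj M := by
  have hM : ∀ i j, (starRingEnd ℂ) (M i j) = qfun ℂ m k i * M i j * qfun ℂ m k j := by
    intro i j
    have := congrFun (congrFun h i) j
    rw [Qmat_eq_diagonal] at this
    simpa [Matrix.map_apply, Matrix.diagonal_mul, Matrix.mul_diagonal,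
      mul_comm, mul_assoc, mul_left_comm] using this
  ext i j
  rcases i with a | a | a <;> rcases j with b | b | b <;>
    simp [midProj, Matrix.map_apply]
  have := hM (Sum.inr (Sum.inl a)) (Sum.inr (Sum.inl b))
  simpa [qfun] using this

/-- Reality (unitary spectral parameter): if `ξ_{−k} = conj ξ_k` and `ξ_{−k} = Qξ_kQ`
for all `k` and `d` is odd, then `conj(Qξ_{−d}^{2ℓ−1}Q) = ξ_{−d}^{2ℓ−1}`,
`conj η̃₀ = Qη̃₀Q`, and the loop `B = λ⁻¹ξ_{−d}^{2ℓ−1} + η₀ + λ·Qξ_{−d}^{2ℓ−1}Q`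
(with `η₀` the `(mid,mid)` part of `η̃₀`) satisfies `B_{−k} = conj B_k`. -/
theorem stmt_18 {m k : ℕ} (hm : 1 ≤ m) (hk : 1 ≤ k) (d ℓ : ℕ) (hd : Odd d) (hd1 : 1 ≤ d)
    (hℓ : 1 ≤ ℓ)
    (ξ : LaurentPolynomial (Matrix (Idx m k) (Idx m k) ℂ))
    (hsupp : ∀ j : ℤ, (d : ℤ) < |j| → ξ.coeff j = 0)
    (hreal : ∀ j : ℤ, ξ.coeff (-j) = (ξ.coeff j).map (starRingEnd ℂ))
    (hτ : ∀ j : ℤ, ξ.coeff (-j) = Qmat ℂ m k * ξ.coeff j * Qmat ℂ m k) :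
    let u : Matrix (Idx m k) (Idx m k) ℂ := (ξ.coeff (-(d : ℤ))) ^ (2 * ℓ - 1)
    let η₀ : Matrix (Idx m k) (Idx m k) ℂ :=
      midProj (etaT (ξ.coeff (-(d : ℤ))) (ξ.coeff (-(d : ℤ) + 1)) (2 * ℓ - 1))
    let B : LaurentPolynomial (Matrix (Idx m k) (Idx m k) ℂ) :=
      LaurentPolynomial.C u * LaurentPolynomial.T (-1) + LaurentPolynomial.C η₀ +
        LaurentPolynomial.C (Qmat ℂ m k * u * Qmat ℂ m k) * LaurentPolynomial.T 1
    (Qmat ℂ m k * u * Qmat ℂ m k).map (starRingEnd ℂ) = u ∧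
    (etaT (ξ.coeff (-(d : ℤ))) (ξ.coeff (-(d : ℤ) + 1)) (2 * ℓ - 1)).map (starRingEnd ℂ)
      = Qmat ℂ m k * etaT (ξ.coeff (-(d : ℤ))) (ξ.coeff (-(d : ℤ) + 1)) (2 * ℓ - 1) * Qmat ℂ m k ∧
    ∀ j : ℤ, B.coeff (-j) = (B.coeff j).map (starRingEnd ℂ) := by
  intro u η₀ B
  set Q : Matrix (Idx m k) (Idx m k) ℂ := Qmat ℂ m k with hQ
  have hQQ : Q * Q = 1 := Qmat_mul_Qmat ℂ m k
  set f : Matrix (Idx m k) (Idx m k) ℂ →+* Matrix (Idx m k) (Idx m k) ℂ :=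
    (starRingEnd ℂ).mapMatrix with hf
  have hfeq : ∀ M : Matrix (Idx m k) (Idx m k) ℂ, f M = M.map (starRingEnd ℂ) := by
    intro M; rfl
  have hQf : f Q = Q := by rw [hfeq]; exact Qmat_conj m k
  have hcoef : ∀ j : ℤ, f (ξ.coeff j) = Q * ξ.coeff j * Q := by
    intro j
    rw [hfeq, ← hreal j, hτ j]
  set u₀ : Matrix (Idx m k) (Idx m k) ℂ := ξ.coeff (-(d : ℤ)) with hu₀
  set v₀ : Matrix (Idx m k) (Idx m k) ℂ := ξ.coeff (-(d : ℤ) + 1) with hv₀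
  set N : ℕ := 2 * ℓ - 1 with hN
  -- conj u = Q u Q
  have hfu : f u = Q * u * Q := by
    show f (u₀ ^ N) = Q * u₀ ^ N * Q
    rw [map_pow, hcoef, conjPow hQQ]
  -- Part 1
  have part1 : (Q * u * Q).map (starRingEnd ℂ) = u := by
    rw [← hfeq, _root_.map_mul, _root_.map_mul, hQf, hfu]
    calc Q * (Q * u * Q) * Q = (Q * Q) * u * (Q * Q) := by simp only [mul_assoc]
      _ = u := by rw [hQQ]; simp
  -- Part 2
  have part2 : (etaT u₀ v₀ N).map (starRingEnd ℂ) = Q * etaT u₀ v₀ N * Q := by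
    rw [← hfeq]
    unfold etaT
    rw [map_sum, Finset.mul_sum, Finset.sum_mul]
    refine Finset.sum_congr rfl fun i _ => ?_
    rw [_root_.map_mul, _root_.map_mul, _root_.map_pow, _root_.map_pow, hcoef, hcoef, conjPow hQQ, conjPow hQQ,
      conj2 hQQ, conj2 hQQ]
  refine ⟨part1, part2, ?_⟩
  -- conj η₀ = η₀
  have hη : η₀.map (starRingEnd ℂ) = η₀ := midProj_conj_eq part2
  have hfu' : u.map (starRingEnd ℂ) = Q * u * Q := hfu
  -- Part 3
  have fQuQ : f (Q * u * Q) = u := by rw [hfeq]; exact part1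
  have fη : f η₀ = η₀ := by rw [hfeq]; exact hη
  intro j
  have hB : ∀ i : ℤ, B.coeff i = (if (-1 : ℤ) = i then u else 0) + (if (0 : ℤ) = i then η₀ else 0) +
      (if (1 : ℤ) = i then Q * u * Q else 0) := by
    intro i
    have hBe : B = LaurentPolynomial.C u * LaurentPolynomial.T (-1) + LaurentPolynomial.C η₀ +
        LaurentPolynomial.C (Q * u * Q) * LaurentPolynomial.T 1 := rfl
    have hBe' : B = (AddMonoidAlgebra.single (-1) u + AddMonoidAlgebra.single 0 η₀ +
        AddMonoidAlgebra.single 1 (Q * u * Q) : LaurentPolynomial (Matrix (Idx m k) (Idx m k) ℂ)) := by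
      rw [hBe, LaurentPolynomial.single_eq_C_mul_T, LaurentPolynomial.single_eq_C_mul_T,
        LaurentPolynomial.single_eq_C_mul_T, LaurentPolynomial.T_zero, mul_one]
    rw [hBe']
    erw [AddMonoidAlgebra.coeff_add, AddMonoidAlgebra.coeff_add, AddMonoidAlgebra.coeff_single,
      AddMonoidAlgebra.coeff_single, AddMonoidAlgebra.coeff_single, Finsupp.add_apply, Finsupp.add_apply, Finsupp.single_apply, Finsupp.single_apply,
      Finsupp.single_apply]
  rw [hB (-j), hB j, ← hfeq]
  split_ifs <;> first | omega | simp [hfu, fη, fQuQ]
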